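/- For the fractional perimeter in ℝⁿ: for any measurable E and any ball B_r = B_r(x), Per(E, B_r) − Per(E ∪ B_r, B_r) ≥ Per(E ∩ B_r) − Per(B_r), where Per is the fractional s-perimeter and Per(E,U) its localization. -/
import Mathlib


open MeasureTheory
open scoped ENNReal

/-- The fractional kernel `|h|^{-(n+s)}`. -/
noncomputable def fracKernel (n : ℕ) (s : ℝ) (h : EuclideanSpace ℝ (Fin n)) : ℝ≥0∞ :=
  ENNReal.ofReal (1 / ‖h‖ ^ ((n : ℝ) + s))

/-- The fractional `s`-perimeter. -/
noncomputable def fracPer (n : ℕ) (s : ℝ) (E : Set (EuclideanSpace ℝ (Fin n))) : ℝ≥0∞ :=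
  ∫⁻ x in E, ∫⁻ y in Eᶜ, fracKernel n s (x - y) ∂volume ∂volume

/-- The localized fractional `s`-perimeter. -/
noncomputable def fracPerLoc (n : ℕ) (s : ℝ)
    (E U : Set (EuclideanSpace ℝ (Fin n))) : ℝ≥0∞ :=
  (∫⁻ x in E ∩ U, ∫⁻ y in Eᶜ, fracKernel n s (x - y) ∂volume ∂volume) +
  (∫⁻ x in E \ U, ∫⁻ y in U \ E, fracKernel n s (x - y) ∂volume ∂volume)

lemma fracKernel_meas (n : ℕ) (s : ℝ) :
    Measurable fun p : EuclideanSpace ℝ (Fin n) × EuclideanSpace ℝ (Fin n) =>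
      fracKernel n s (p.1 - p.2) := by
  unfold fracKernel
  apply Measurable.ennreal_ofReal
  exact measurable_const.div
    (((measurable_fst.sub measurable_snd).norm).pow measurable_const)

lemma inner_meas (n : ℕ) (s : ℝ) (A : Set (EuclideanSpace ℝ (Fin n))) :
    Measurable fun x => ∫⁻ y in A, fracKernel n s (x - y) ∂volume :=
  Measurable.lintegral_prod_right (fracKernel_meas n s)

/-- For any measurable set `E` and any ball `B_r(x)`,
`Per(E, B_r) − Per(E ∪ B_r, B_r) ≥ Per(E ∩ B_r) − Per(B_r)`, stated in the
equivalent additive form `Per(E ∩ B_r) + Per(E ∪ B_r, B_r) ≤ Per(E, B_r) + Per(B_r)`. -/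
theorem fracPer_ball_comparison {n : ℕ} {s : ℝ} (hs : s ∈ Set.Ioo (0 : ℝ) 1)
    (E : Set (EuclideanSpace ℝ (Fin n))) (hE : MeasurableSet E)
    (x : EuclideanSpace ℝ (Fin n)) (r : ℝ) (hr : 0 < r) :
    fracPer n s (E ∩ Metric.ball x r)
        + fracPerLoc n s (E ∪ Metric.ball x r) (Metric.ball x r)
      ≤ fracPerLoc n s E (Metric.ball x r) + fracPer n s (Metric.ball x r) := by
  set B := Metric.ball x r with hBdef
  have hB : MeasurableSet B := measurableSet_ball
  set g : Set (EuclideanSpace ℝ (Fin n)) → EuclideanSpace ℝ (Fin n) → ℝ≥0∞ :=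
    fun A z => ∫⁻ y in A, fracKernel n s (z - y) ∂volume with hg
  -- decomposition of fracPer (E ∩ B)
  have h1 : fracPer n s (E ∩ B)
      = (∫⁻ z in E ∩ B, g Eᶜ z ∂volume) + (∫⁻ z in E ∩ B, g (E \ B) z ∂volume) := by
    have hset : (E ∩ B)ᶜ = Eᶜ ∪ (E \ B) := by
      ext y; by_cases hy : y ∈ E <;> simp [Set.mem_compl_iff, hy]
    have hdisj : Disjoint Eᶜ (E \ B) :=
      Set.disjoint_left.mpr (fun a ha hb => ha hb.1)
    rw [fracPer, ← lintegral_add_left (inner_meas n s Eᶜ)]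
    refine lintegral_congr fun z => ?_
    rw [hset, lintegral_union (hE.diff hB) hdisj]
  -- decomposition of fracPerLoc (E ∪ B) B
  have h2 : fracPerLoc n s (E ∪ B) B = ∫⁻ z in B, g (Eᶜ \ B) z ∂volume := by
    rw [fracPerLoc]
    have e1 : (E ∪ B) ∩ B = B := Set.inter_eq_right.mpr Set.subset_union_right
    have e2 : (E ∪ B)ᶜ = Eᶜ \ B := by
      ext y; simp [Set.mem_compl_iff, Set.mem_diff]
    have e3 : B \ (E ∪ B) = ∅ := by
      ext y; simp; tauto
    rw [e1, e2, e3]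
    simp [hg]
  -- decomposition of fracPer B
  have h3 : fracPer n s B
      = (∫⁻ z in B, g (Eᶜ \ B) z ∂volume) + (∫⁻ z in B, g (E \ B) z ∂volume) := by
    have hset : Bᶜ = (Eᶜ \ B) ∪ (E \ B) := by
      ext y; by_cases hy : y ∈ E <;> simp [Set.mem_compl_iff, hy]
    have hdisj : Disjoint (Eᶜ \ B) (E \ B) :=
      Set.disjoint_left.mpr (fun a ha hb => ha.1 hb.1)
    rw [fracPer, ← lintegral_add_left (inner_meas n s (Eᶜ \ B))]
    refine lintegral_congr fun z => ?_
    rw [hset, lintegral_union (hE.diff hB) hdisj]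
  -- key monotonicity
  have hmono : (∫⁻ z in E ∩ B, g (E \ B) z ∂volume)
      ≤ ∫⁻ z in B, g (E \ B) z ∂volume :=
    lintegral_mono_set Set.inter_subset_right
  have hloc : (∫⁻ z in E ∩ B, g Eᶜ z ∂volume) ≤ fracPerLoc n s E B :=
    le_add_right le_rfl
  calc fracPer n s (E ∩ B) + fracPerLoc n s (E ∪ B) B
      = (∫⁻ z in E ∩ B, g Eᶜ z ∂volume) + (∫⁻ z in E ∩ B, g (E \ B) z ∂volume)
        + (∫⁻ z in B, g (Eᶜ \ B) z ∂volume) := by rw [h1, h2]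
    _ ≤ fracPerLoc n s E B + (∫⁻ z in B, g (E \ B) z ∂volume)
        + (∫⁻ z in B, g (Eᶜ \ B) z ∂volume) := by gcongr
    _ = fracPerLoc n s E B + fracPer n s B := by rw [h3]; ring
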